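/- arXiv:2409.14783 — 6 statements merged into one kernel-verified Lean document; each statement's English description precedes it below -/
import Mathlib

section
/- A bipartite graph G admits a proper list coloring if and only if the graph G' (disjoint union of G with its bipartition-swapped copy, where each copied vertex inherits the original's list) admits a balanced proper list coloring, i.e., a proper list coloring in which every color that is used is either used on exactly one vertex or used on at least one vertex in each bipartition class of G'. -/
/-- The disjoint union of `G` with a bipartition-swapped copy of itself. -/
def swapUnion {V : Type*} (G : SimpleGraph V) : SimpleGraph (V ⊕ V) :=
  SimpleGraph.fromRel (fun a b : V ⊕ V =>
    match a, b with
    | Sum.inl u, Sum.inl v => G.Adj u v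
    | Sum.inr u, Sum.inr v => G.Adj u v
    | _, _ => False)

/-! Forward: colour both copies of `G` by the same colouring; a vertex and its copy lie in
opposite classes of `G'`, so every used colour meets both classes. Backward: restrict to the
first copy. -/

section SwapUnion

variable {V : Type*} {G : SimpleGraph V}

@[simp]
lemma swapUnion_adj_inl_inl {u v : V} : (swapUnion G).Adj (.inl u) (.inl v) ↔ G.Adj u v := by
  simp only [swapUnion, SimpleGraph.fromRel_adj, ne_eq, Sum.inl.injEq]
  exact ⟨fun h => h.2.elim id .symm, fun h => ⟨h.ne, .inl h⟩⟩

@[simp]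
lemma swapUnion_adj_inr_inr {u v : V} : (swapUnion G).Adj (.inr u) (.inr v) ↔ G.Adj u v := by
  simp only [swapUnion, SimpleGraph.fromRel_adj, ne_eq, Sum.inr.injEq]
  exact ⟨fun h => h.2.elim id .symm, fun h => ⟨h.ne, .inl h⟩⟩

@[simp]
lemma not_swapUnion_adj_inl_inr {u v : V} : ¬(swapUnion G).Adj (.inl u) (.inr v) := by
  simp [swapUnion]

@[simp]
lemma not_swapUnion_adj_inr_inl {u v : V} : ¬(swapUnion G).Adj (.inr u) (.inl v) := by
  simp [swapUnion]

lemma Sum.elim_ne_of_swapUnion_adj {α : Type*} {c : V → α}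
    (hc : ∀ u v, G.Adj u v → c u ≠ c v) {a b : V ⊕ V} (hab : (swapUnion G).Adj a b) :
    Sum.elim c c a ≠ Sum.elim c c b := by
  cases a <;> cases b <;> simp_all

end SwapUnion

lemma exists_sum_elim_eq_of_side {V α : Type*} (c : V → α) (side : V → Bool) (v : V) (b : Bool) :
    ∃ w, Sum.elim c c w = c v ∧ Sum.elim side (fun v => !side v) w = b := by
  by_cases h : side v = b
  · exact ⟨.inl v, rfl, h⟩
  · exact ⟨.inr v, rfl, by cases b <;> simp_all⟩

theorem list_coloring_iff_balanced_general {V : Type*} (k : ℕ) (G : SimpleGraph V)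
    (side : V → Bool)
    (L : V → Finset (Fin k)) :
    (∃ c : V → Fin k, (∀ v, c v ∈ L v) ∧ ∀ u v : V, G.Adj u v → c u ≠ c v) ↔
    (∃ c' : V ⊕ V → Fin k,
      (∀ w : V ⊕ V, c' w ∈ L (Sum.elim id id w)) ∧
      (∀ a b : V ⊕ V, (swapUnion G).Adj a b → c' a ≠ c' b) ∧
      (∀ i : Fin k, (∃ w, c' w = i) →
        ((∃! w, c' w = i) ∨
         ((∃ w, c' w = i ∧ Sum.elim side (fun v => !side v) w = false) ∧
          (∃ w, c' w = i ∧ Sum.elim side (fun v => !side v) w = true))))) := by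
  constructor
  · rintro ⟨c, hL, hc⟩
    refine ⟨Sum.elim c c, fun w => ?_, fun a b => Sum.elim_ne_of_swapUnion_adj hc, ?_⟩
    · cases w <;> exact hL _
    · rintro i ⟨w, rfl⟩
      have hw : Sum.elim c c w = c (Sum.elim id id w) := by cases w <;> rfl
      rw [hw]
      exact .inr ⟨exists_sum_elim_eq_of_side c side _ false,
        exists_sum_elim_eq_of_side c side _ true⟩
  · rintro ⟨c', hL, hc', -⟩
    exact ⟨c' ∘ .inl, fun v => hL (.inl v),
      fun u v huv => hc' _ _ (swapUnion_adj_inl_inl.mpr huv)⟩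

/-- A bipartite graph `G` admits a proper list coloring iff the disjoint union `G'`
of `G` with its bipartition-swapped copy (copied vertices inheriting the lists) admits
a balanced proper list coloring: every used color is used on exactly one vertex or on
at least one vertex in each bipartition class of `G'`.  `side v = false` means `v ∈ V1`;
the bipartition of `G'` is given by `Sum.elim side (fun v => !side v)`. -/
theorem list_coloring_iff_balanced {V : Type*} (k : ℕ) (G : SimpleGraph V)
    (side : V → Bool) (hG : ∀ u v : V, G.Adj u v → side u ≠ side v)
    (L : V → Finset (Fin k)) :
    (∃ c : V → Fin k, (∀ v, c v ∈ L v) ∧ ∀ u v : V, G.Adj u v → c u ≠ c v) ↔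
    (∃ c' : V ⊕ V → Fin k,
      (∀ w : V ⊕ V, c' w ∈ L (Sum.elim id id w)) ∧
      (∀ a b : V ⊕ V, (swapUnion G).Adj a b → c' a ≠ c' b) ∧
      (∀ i : Fin k, (∃ w, c' w = i) →
        ((∃! w, c' w = i) ∨
         ((∃ w, c' w = i ∧ Sum.elim side (fun v => !side v) w = false) ∧
          (∃ w, c' w = i ∧ Sum.elim side (fun v => !side v) w = true))))) :=
  list_coloring_iff_balanced_general k G side L
end

section
/- Every finite connected graph G with at least 2 vertices admits a partition of its vertex set into vertex-disjoint sets S_1,...,S_r, each of size at least 2, such that each S_i induces a subgraph of diameter at most 2 in G. -/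
/-- `S` is an `s`-club of `G`: the subgraph induced by `S` has diameter at most `s`. -/
def IsGraphClub {V : Type*} (G : SimpleGraph V) (s : ℕ) (S : Set V) : Prop :=
  ∀ u v : S, ∃ p : (G.induce S).Walk u v, p.length ≤ s

/-!
Take a minimal spanning subgraph `H` of `G` without isolated vertices (a minimal edge cover).
Minimality forbids triangles and paths on four vertices in `H`, so the components of `H` are
stars, each with at least two vertices. A star has diameter at most 2, so the vertex sets of
the components of `H` form the required partition.
-/

lemma isGraphClub_two_of_adj_or_exists_adj_adj {V : Type*} {G : SimpleGraph V} {S : Set V}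
    (h : ∀ u ∈ S, ∀ w ∈ S, u ≠ w → G.Adj u w ∨ ∃ x ∈ S, G.Adj u x ∧ G.Adj x w) :
    IsGraphClub G 2 S := by
  rintro ⟨u, hu⟩ ⟨w, hw⟩
  by_cases huw : u = w
  · subst huw
    exact ⟨.nil, by simp⟩
  rcases h u hu w hw huw with huw | ⟨x, hx, hux, hxw⟩
  · exact ⟨(show (G.induce S).Adj ⟨u, hu⟩ ⟨w, hw⟩ from huw).toWalk, by simp⟩
  · exact ⟨.cons (show (G.induce S).Adj ⟨u, hu⟩ ⟨x, hx⟩ from hux)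
      (show (G.induce S).Adj ⟨x, hx⟩ ⟨w, hw⟩ from hxw).toWalk, by simp⟩

namespace SimpleGraph

variable {V : Type*}

/-- `H` contains neither a triangle nor a path on four vertices, so each of its components is
a star. -/
def IsStarForest (H : SimpleGraph V) : Prop :=
  ∀ ⦃a b c d : V⦄, H.Adj a b → H.Adj b c → H.Adj c d → a = c ∨ b = d

lemma IsStarForest.eq_or_adj_or_exists_adj_adj {H : SimpleGraph V} (hH : H.IsStarForest)
    {u w : V} (huw : H.Reachable u w) :
    u = w ∨ H.Adj u w ∨ ∃ x, H.Adj u x ∧ H.Adj x w := by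
  rw [reachable_iff_reflTransGen] at huw
  induction huw with
  | refl => exact .inl rfl
  | @tail w y _ hwy ih =>
    rcases ih with rfl | huw | ⟨x, hux, hxw⟩
    · exact .inr (.inl hwy)
    · exact .inr (.inr ⟨w, huw, hwy⟩)
    · rcases hH hux hxw hwy with rfl | rfl
      · exact .inr (.inl hwy)
      · exact .inr (.inl hux)

/-- Otherwise deleting an edge `bc` with `a - b - c - d`, `a ≠ c`, `b ≠ d` would
leave every vertex covered. -/
lemma isStarForest_of_minimal {G H : SimpleGraph V}
    (hH : Minimal (fun H ↦ H ≤ G ∧ ∀ v, ∃ w, H.Adj v w) H) : H.IsStarForest := by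
  intro a b c d hab hbc hcd
  by_contra! hne
  set H' := H.deleteEdges {s(b, c)}
  have hcover : ∀ v, ∃ w, H'.Adj v w := by
    intro v
    obtain ⟨w, hvw⟩ := hH.prop.2 v
    by_cases hbad : s(v, w) = s(b, c)
    · rcases Sym2.eq_iff.mp hbad with ⟨rfl, rfl⟩ | ⟨rfl, rfl⟩
      · exact ⟨a, by simp [H', hab.symm, hne.1, hbc.ne]⟩
      · exact ⟨d, by simp [H', hcd, hne.2.symm, hbc.ne']⟩
    · exact ⟨w, by simp [H', hvw, hbad]⟩
  have hle := hH.le_of_le ⟨(deleteEdges_le _).trans hH.prop.1, hcover⟩ (deleteEdges_le _)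
  simpa [H'] using hle hbc

lemma exists_isStarForest_le [Finite V] {G : SimpleGraph V} (hG : ∀ v, ∃ w, G.Adj v w) :
    ∃ H ≤ G, H.IsStarForest ∧ ∀ v, ∃ w, H.Adj v w := by
  obtain ⟨H, hH⟩ :=
    (Set.toFinite {H : SimpleGraph V | H ≤ G ∧ ∀ v, ∃ w, H.Adj v w}).exists_minimal
      ⟨G, le_rfl, hG⟩
  exact ⟨H, hH.prop.1, isStarForest_of_minimal hH, hH.prop.2⟩

lemma exists_finpartition_isGraphClub_two [Fintype V] [DecidableEq V] {G : SimpleGraph V}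
    (hG : ∀ v, ∃ w, G.Adj v w) :
    ∃ Q : Finpartition (Finset.univ : Finset V),
      ∀ S ∈ Q.parts, 2 ≤ S.card ∧ IsGraphClub G 2 (S : Set V) := by
  classical
  obtain ⟨H, hHG, hstar, hcover⟩ := exists_isStarForest_le hG
  let Q := Finpartition.ofSetoid H.reachableSetoid
  have mem_part {a b : V} : b ∈ Q.part a ↔ H.Reachable a b :=
    Finpartition.mem_part_ofSetoid_iff_rel
  refine ⟨Q, fun S hS ↦ ?_⟩
  obtain ⟨a, haS⟩ := Q.nonempty_of_mem_parts hS
  obtain rfl := Q.part_eq_of_mem hS haS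
  obtain ⟨b, hab⟩ := hcover a
  refine ⟨Finset.one_lt_card.mpr ⟨a, haS, b, mem_part.mpr hab.reachable, hab.ne⟩,
    isGraphClub_two_of_adj_or_exists_adj_adj fun u hu w hw huw ↦ ?_⟩
  have hu : H.Reachable a u := mem_part.mp hu
  rcases hstar.eq_or_adj_or_exists_adj_adj (hu.symm.trans (mem_part.mp hw)) with
    rfl | huw | ⟨x, hux, hxw⟩
  · exact absurd rfl huw
  · exact .inl (hHG huw)
  · exact .inr ⟨x, mem_part.mpr (hu.trans hux.reachable), hHG hux, hHG hxw⟩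

end SimpleGraph

/-- Every finite connected graph with at least 2 vertices admits a partition of its
vertex set into vertex-disjoint sets, each of size at least 2, each inducing a
subgraph of diameter at most 2. -/
theorem connected_partition_twoClubs {V : Type*} [Fintype V] [DecidableEq V]
    (G : SimpleGraph V) (hconn : G.Connected) (hcard : 2 ≤ Fintype.card V) :
    ∃ P : Finset (Finset V),
      (∀ S ∈ P, ∀ S' ∈ P, S ≠ S' → Disjoint S S') ∧
      P.biUnion id = Finset.univ ∧
      (∀ S ∈ P, 2 ≤ S.card ∧ IsGraphClub G 2 (S : Set V)) := by
  have : Nontrivial V := Fintype.one_lt_card_iff_nontrivial.mp hcard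
  obtain ⟨Q, hQ⟩ :=
    SimpleGraph.exists_finpartition_isGraphClub_two hconn.preconnected.exists_adj_of_nontrivial
  exact ⟨Q.parts, fun _ hS _ hS' ↦ Q.disjoint hS hS', Q.biUnion_parts, hQ⟩
end

section
/- Let M be a 2-bounded 3D matching instance and t ≥ 5. A subset of k triples of M forms a matching (no two triples agree in any coordinate) if and only if the corresponding sets S'_i = {x_i, y_i, z_i, c_i, h_{i,1}, ..., h_{i,t-4}} in G_{M,t,2} are pairwise vertex-disjoint; in that case they form a disjoint collection of (t,2)-clubs covering exactly t·k vertices. -/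
/-!
Each `S'_i` is a star centred at `c_i`, hence a 2-club, and has `4 + (t - 4) = t` vertices.
The vertices `c_i` and `h_{i,k}` are private to the triple `i`, so for `i ≠ j` the sets `S'_i` and
`S'_j` can only meet in a coordinate vertex: they are disjoint exactly when the triples share no
coordinate.
-/

/-- `S` is an `s`-club of `G`: the subgraph induced by `S` has diameter at most `s`. -/
def IsSClub {V : Type*} (G : SimpleGraph V) (s : ℕ) (S : Set V) : Prop :=
  ∀ u v : S, ∃ p : (G.induce S).Walk u v, p.length ≤ s

/-- Vertices of the graph `G_{M,t,2}`. -/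
inductive MVtx (X Y Z : Type) (m t : ℕ) where
  | vx (a : X)
  | vy (b : Y)
  | vz (c : Z)
  | vc (i : Fin m)
  | vh (i : Fin m) (j : Fin (t - 4))

/-- Base adjacency relation of `G_{M,t,2}`. -/
def MRel {X Y Z : Type} {m t : ℕ} (tr : Fin m → X × Y × Z) :
    MVtx X Y Z m t → MVtx X Y Z m t → Prop
  | MVtx.vc i, MVtx.vh i' _ => i = i'
  | MVtx.vc i, MVtx.vx a => (tr i).1 = a
  | MVtx.vc i, MVtx.vy b => (tr i).2.1 = b
  | MVtx.vc i, MVtx.vz c => (tr i).2.2 = c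
  | _, _ => False

/-- The graph `G_{M,t,2}`. -/
def MGraph {X Y Z : Type} {m t : ℕ} (tr : Fin m → X × Y × Z) :
    SimpleGraph (MVtx X Y Z m t) :=
  SimpleGraph.fromRel (MRel tr)

/-- The set `S'_i = {x_i, y_i, z_i, c_i, h_{i,1}, …, h_{i,t-4}}` in `G_{M,t,2}`. -/
def Sset (X Y Z : Type) (m t : ℕ) (tr : Fin m → X × Y × Z) (i : Fin m) :
    Set (MVtx X Y Z m t) :=
  {MVtx.vx (tr i).1, MVtx.vy (tr i).2.1, MVtx.vz (tr i).2.2, MVtx.vc i} ∪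
    {w | ∃ j : Fin (t - 4), w = MVtx.vh i j}

lemma isSClub_two_of_forall_adj {V : Type*} {G : SimpleGraph V} {S : Set V} {c : V}
    (hc : c ∈ S) (hadj : ∀ v ∈ S, v ≠ c → G.Adj c v) : IsSClub G 2 S := by
  have hreach : ∀ w : S, ∃ p : (G.induce S).Walk ⟨c, hc⟩ w, p.length ≤ 1 := by
    rintro ⟨w, hw⟩
    by_cases hwc : w = c
    · subst hwc
      exact ⟨.nil, zero_le_one⟩
    · exact ⟨SimpleGraph.Adj.toWalk (G := G.induce S) (hadj w hw hwc), le_rfl⟩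
  intro u v
  obtain ⟨p, hp⟩ := hreach u
  obtain ⟨q, hq⟩ := hreach v
  exact ⟨p.reverse.append q, by simp only [SimpleGraph.Walk.length_append,
    SimpleGraph.Walk.length_reverse]; omega⟩

lemma Set.ncard_biUnion_finset_eq_mul {ι α : Type*} {T : Finset ι} {S : ι → Set α} {n : ℕ}
    (hfin : ∀ i ∈ T, (S i).Finite) (hcard : ∀ i ∈ T, (S i).ncard = n)
    (hdisj : (T : Set ι).PairwiseDisjoint S) : (⋃ i ∈ T, S i).ncard = n * T.card := by
  rw [← Finset.set_biUnion_coe, T.finite_toSet.ncard_biUnion hfin hdisj, finsum_mem_coe_finset,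
    Finset.sum_congr rfl hcard, Finset.sum_const, smul_eq_mul, mul_comm]

section
variable {X Y Z : Type} {m t : ℕ} {tr : Fin m → X × Y × Z} {i j : Fin m}

lemma sset_eq_union_range :
    Sset X Y Z m t tr i =
      {.vx (tr i).1, .vy (tr i).2.1, .vz (tr i).2.2, .vc i} ∪ Set.range (MVtx.vh i) := by
  ext w
  simp only [Sset, Set.mem_union, Set.mem_ofPred_eq, Set.mem_range, eq_comm]

lemma finite_sset : (Sset X Y Z m t tr i).Finite := by
  rw [sset_eq_union_range]
  exact Set.toFinite _

lemma ncard_sset (ht : 4 ≤ t) : (Sset X Y Z m t tr i).ncard = t := by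
  have hinj : Function.Injective (MVtx.vh (X := X) (Y := Y) (Z := Z) (t := t) i) :=
    fun _ _ h => (MVtx.vh.inj h).2
  rw [sset_eq_union_range, Set.ncard_union_eq, Set.ncard_range_of_injective hinj,
    Nat.card_eq_fintype_card, Fintype.card_fin]
  · rw [Set.ncard_insert_of_notMem, Set.ncard_insert_of_notMem, Set.ncard_insert_of_notMem,
      Set.ncard_singleton] <;> simp
    omega
  · rw [Set.disjoint_right]
    rintro _ ⟨k, rfl⟩
    simp

lemma mGraph_adj_vc {w : MVtx X Y Z m t} (hw : w ∈ Sset X Y Z m t tr i) (hne : w ≠ .vc i) :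
    (MGraph tr).Adj (.vc i) w := by
  rw [sset_eq_union_range] at hw
  rcases hw with (rfl | rfl | rfl | rfl) | ⟨k, rfl⟩ <;>
    simp_all [MGraph, MRel]

lemma isSClub_sset : IsSClub (MGraph tr) 2 (Sset X Y Z m t tr i) :=
  isSClub_two_of_forall_adj (by simp [Sset]) fun _ => mGraph_adj_vc

lemma disjoint_sset_iff (hij : i ≠ j) :
    Disjoint (Sset X Y Z m t tr i) (Sset X Y Z m t tr j) ↔
      (tr i).1 ≠ (tr j).1 ∧ (tr i).2.1 ≠ (tr j).2.1 ∧ (tr i).2.2 ≠ (tr j).2.2 := by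
  constructor
  · intro hd
    have hshared (w) (hi : w ∈ Sset X Y Z m t tr i) (hj : w ∈ Sset X Y Z m t tr j) : False :=
      Set.disjoint_left.mp hd hi hj
    exact ⟨fun h => hshared (.vx (tr i).1) (by simp [Sset]) (by simp [Sset, h]),
      fun h => hshared (.vy (tr i).2.1) (by simp [Sset]) (by simp [Sset, h]),
      fun h => hshared (.vz (tr i).2.2) (by simp [Sset]) (by simp [Sset, h])⟩
  · rintro ⟨hx, hy, hz⟩
    rw [Set.disjoint_left]
    intro w hwi hwj
    rw [sset_eq_union_range] at hwi hwj
    rcases hwi with (rfl | rfl | rfl | rfl) | ⟨k, rfl⟩ <;> simp_all [eq_comm]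

end

/-- A set `T` of triples of `M` is a matching (no two triples agree in any coordinate)
iff the corresponding sets `S'_i` in `G_{M,t,2}` are pairwise disjoint; in that case
they are pairwise disjoint (t,2)-clubs (each of size exactly `t`) covering `t·|T|`
vertices. -/
theorem matching_iff_disjoint_clubs {X Y Z : Type} {m t : ℕ} (ht : 5 ≤ t)
    (tr : Fin m → X × Y × Z) (T : Finset (Fin m)) :
    ((∀ i ∈ T, ∀ j ∈ T, i ≠ j →
        (tr i).1 ≠ (tr j).1 ∧ (tr i).2.1 ≠ (tr j).2.1 ∧ (tr i).2.2 ≠ (tr j).2.2) ↔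
      (∀ i ∈ T, ∀ j ∈ T, i ≠ j → Disjoint (Sset X Y Z m t tr i) (Sset X Y Z m t tr j))) ∧
    ((∀ i ∈ T, ∀ j ∈ T, i ≠ j →
        (tr i).1 ≠ (tr j).1 ∧ (tr i).2.1 ≠ (tr j).2.1 ∧ (tr i).2.2 ≠ (tr j).2.2) →
      (∀ i ∈ T, IsSClub (MGraph tr) 2 (Sset X Y Z m t tr i) ∧
        (Sset X Y Z m t tr i).ncard = t) ∧
      (⋃ i ∈ T, Sset X Y Z m t tr i).ncard = t * T.card) := by
  refine ⟨forall₄_congr fun _ _ _ _ => forall_congr' fun hij => (disjoint_sset_iff hij).symm,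
    fun hmatch => ⟨fun i _ => ⟨isSClub_sset, ncard_sset (by omega)⟩, ?_⟩⟩
  exact Set.ncard_biUnion_finset_eq_mul (fun _ _ => finite_sset) (fun _ _ => ncard_sset (by omega))
    fun i hi j hj hij => (disjoint_sset_iff hij).mpr (hmatch i hi j hj hij)
end

section
/- In the graph G_{M,t,3} constructed from a 2-bounded 3D matching instance M (for fixed t ≥ 8), every 3-club has size at most t, and the only 3-clubs of size exactly t are the sets N[c_i] ∪ {h_{i,j} : j ∈ [t-5]}. -/
/-- Vertices of the graph `G_{M,t,3}`: elements of `X ∪ Y ∪ Z`, the vertices `a_i`,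
the triple vertices `c_i` (`i ∈ [m]`), and the pendant vertices `h_{i,j}` (`j ∈ [t-5]`). -/
inductive MVtx3 (X Y Z : Type) (m t : ℕ) where
  | vx (a : X)
  | vy (b : Y)
  | vz (c : Z)
  | va (i : Fin m)
  | vc (i : Fin m)
  | vh (i : Fin m) (j : Fin (t - 5))

/-- Base adjacency relation of `G_{M,t,3}`: `c_i — a_i`, `a_i — h_{i,j}`, and `c_i`
joined to the three coordinates of triple `i`. -/
def MRel3 {X Y Z : Type} {m t : ℕ} (tr : Fin m → X × Y × Z) :
    MVtx3 X Y Z m t → MVtx3 X Y Z m t → Prop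
  | MVtx3.vc i, MVtx3.va i' => i = i'
  | MVtx3.va i, MVtx3.vh i' _ => i = i'
  | MVtx3.vc i, MVtx3.vx a => (tr i).1 = a
  | MVtx3.vc i, MVtx3.vy b => (tr i).2.1 = b
  | MVtx3.vc i, MVtx3.vz c => (tr i).2.2 = c
  | _, _ => False

/-- The graph `G_{M,t,3}`. -/
def MGraph3 {X Y Z : Type} {m t : ℕ} (tr : Fin m → X × Y × Z) :
    SimpleGraph (MVtx3 X Y Z m t) :=
  SimpleGraph.fromRel (MRel3 tr)

/-- The set `N[c_i] ∪ {h_{i,j} : j ∈ [t-5]}` in `G_{M,t,3}`. -/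
def Nc3 (X Y Z : Type) (m t : ℕ) (tr : Fin m → X × Y × Z) (i : Fin m) :
    Set (MVtx3 X Y Z m t) :=
  insert (MVtx3.vc i) ((MGraph3 tr).neighborSet (MVtx3.vc i)) ∪
    {w | ∃ j : Fin (t - 5), w = MVtx3.vh i j}

/-!
The vertices `c_i`, `h_{i,j}` and the vertices `a_i`, `x`, `y`, `z` form a bipartition of
`G_{M,t,3}`, so two distinct vertices on the same side of a 3-club `S` have a common neighbour
in `S`. If `S` contains a pendant vertex `h_{i,j}`, every vertex of `S` is within distance 3
of it, which confines `S` to `N[c_i] ∪ {h_{i,j} : j ∈ [t-5]}`, a set of exactly `t` vertices.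
Otherwise `|S| ≤ 7 < t`: any two triple vertices `c_k, c_l ∈ S` share an element of `S`, and
any two elements of `S` share a triple; as each element lies in at most two triples, this
allows at most three `c_k` and at most four elements in `S`, and an `a_i ∈ S` forces all
elements of `S` into triple `i`.
-/

open SimpleGraph

section SClub

variable {V : Type*} {G : SimpleGraph V} {S : Set V}

theorem SimpleGraph.Walk.apply_le_apply_add_length {f : V → ℕ}
    (hf : ∀ x y, G.Adj x y → f y ≤ f x + 1) {u v : V} (p : G.Walk u v) :
    f v ≤ f u + p.length := by
  induction p with
  | nil => simp
  | cons h p ih =>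
    rw [Walk.length_cons]
    have := hf _ _ h
    omega

theorem IsSClub.apply_le_apply_add {s : ℕ} (hS : IsSClub G s S) {f : V → ℕ}
    (hf : ∀ x y, G.Adj x y → f y ≤ f x + 1) {u v : V} (hu : u ∈ S) (hv : v ∈ S) :
    f v ≤ f u + s := by
  obtain ⟨p, hp⟩ := hS ⟨u, hu⟩ ⟨v, hv⟩
  have : f v ≤ f u + _ := (p.map (Embedding.induce S).toHom).apply_le_apply_add_length hf
  rw [Walk.length_map] at this
  omega

theorem IsSClub.exists_common_neighbor (hS : IsSClub G 3 S) (c : G.Coloring Bool) {u v : V}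
    (hu : u ∈ S) (hv : v ∈ S) (hne : u ≠ v) (hc : c u = c v) :
    ∃ w ∈ S, G.Adj u w ∧ G.Adj w v := by
  obtain ⟨p, hp⟩ := hS ⟨u, hu⟩ ⟨v, hv⟩
  have heven : Even p.length := by
    rw [← Walk.length_map (Embedding.induce S).toHom, c.even_length_iff_congr]
    simp [hc]
  have hpos : p.length ≠ 0 := fun h => hne congr($(Walk.eq_of_length_eq_zero h).val)
  obtain ⟨w, hw⟩ := walkLengthTwoEquivCommonNeighbors (G := G.induce S) _ _ ⟨p, by grind⟩
  rw [mem_commonNeighbors] at hw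
  exact ⟨w, w.2, hw.1, hw.2.symm⟩

theorem isSClub_three_of_dominating_edge {c a : V} (hc : c ∈ S) (ha : a ∈ S) (hca : G.Adj c a)
    (hS : ∀ v ∈ S, v = c ∨ G.Adj v c ∨ v = a ∨ G.Adj v a) : IsSClub G 3 S := by
  let c' : S := ⟨c, hc⟩
  let a' : S := ⟨a, ha⟩
  have short : ∀ x y : S, (x = y ∨ G.Adj x y) →
      ∃ p : (G.induce S).Walk x y, p.length ≤ 1 := by
    rintro x y (rfl | hxy)
    · exact ⟨.nil, by simp⟩
    · exact ⟨(show (G.induce S).Adj x y from hxy).toWalk, by simp⟩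
  have toEdge : ∀ x : S, ∃ e ∈ ({c', a'} : Set S),
      ∃ p : (G.induce S).Walk x e, p.length ≤ 1 := by
    intro x
    rcases hS x x.2 with h | h | h | h
    · exact ⟨c', by simp, short _ _ (Or.inl (Subtype.ext h))⟩
    · exact ⟨c', by simp, short _ _ (Or.inr h)⟩
    · exact ⟨a', by simp, short _ _ (Or.inl (Subtype.ext h))⟩
    · exact ⟨a', by simp, short _ _ (Or.inr h)⟩
  have acrossEdge : ∀ e ∈ ({c', a'} : Set S), ∀ e' ∈ ({c', a'} : Set S),
      ∃ p : (G.induce S).Walk e e', p.length ≤ 1 := by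
    simp only [Set.mem_insert_iff, Set.mem_singleton_iff]
    rintro e (rfl | rfl) e' (rfl | rfl) <;> apply short
    · exact Or.inl rfl
    · exact Or.inr hca
    · exact Or.inr hca.symm
    · exact Or.inl rfl
  intro u v
  obtain ⟨e, he, p, hp⟩ := toEdge u
  obtain ⟨e', he', q, hq⟩ := toEdge v
  obtain ⟨r, hr⟩ := acrossEdge e he e' he'
  refine ⟨p.append (r.append q.reverse), ?_⟩
  simp only [Walk.length_append, Walk.length_reverse]
  omega

end SClub

section Blocks

variable {α ι : Type*} [Finite ι] {N : ι → Set α}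

theorem eq_or_eq_of_mem_of_ncard_le_two (hdeg : ∀ x, {k | x ∈ N k}.ncard ≤ 2) {x : α}
    {j k l : ι} (hk : x ∈ N k) (hl : x ∈ N l) (hj : x ∈ N j) (hkl : k ≠ l) :
    j = k ∨ j = l := by
  by_contra! h
  have := (Set.two_lt_ncard_iff (s := {k | x ∈ N k})).2
    ⟨k, l, j, hk, hl, hj, hkl, h.1.symm, h.2.symm⟩
  have := hdeg x
  omega

variable {E : Set α}

theorem subset_union_of_mem_inter (hdeg : ∀ x, {k | x ∈ N k}.ncard ≤ 2)
    (hE : E.Pairwise fun x y => ∃ k, x ∈ N k ∧ y ∈ N k) {x : α} {k l : ι} (hx : x ∈ E)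
    (hk : x ∈ N k) (hl : x ∈ N l) (hkl : k ≠ l) : E ⊆ N k ∪ N l := by
  intro y hy
  rcases eq_or_ne y x with rfl | hyx
  · exact Or.inl hk
  obtain ⟨j, hyj, hxj⟩ := hE hy hx hyx
  rcases eq_or_eq_of_mem_of_ncard_le_two hdeg hk hl hxj hkl with rfl | rfl
  · exact Or.inl hyj
  · exact Or.inr hyj

theorem ncard_le_four_of_pairwise_mem (hfin : ∀ k, (N k).Finite)
    (hcard : ∀ k, (N k).ncard ≤ 3) (hdeg : ∀ x, {k | x ∈ N k}.ncard ≤ 2)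
    (hE : E.Pairwise fun x y => ∃ k, x ∈ N k ∧ y ∈ N k) : E.ncard ≤ 4 := by
  rcases E.subsingleton_or_nontrivial with hsub | ⟨u, hu, v, hv, huv⟩
  · exact ((Set.ncard_le_one_iff hsub.finite).2 fun ha hb => hsub ha hb).trans (by omega)
  obtain ⟨k, huk, hvk⟩ := hE hu hv huv
  by_cases hEk : E ⊆ N k
  · exact (Set.ncard_le_ncard hEk (hfin k)).trans (by grind)
  obtain ⟨w, hw, hwk⟩ := Set.not_subset.1 hEk
  obtain ⟨l, hul, hwl⟩ := hE hu hw (by grind)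
  obtain ⟨r, hvr, hwr⟩ := hE hv hw (by grind)
  have hlk : l ≠ k := by grind
  have hrk : r ≠ k := by grind
  have hkl := subset_union_of_mem_inter hdeg hE hu huk hul hlk.symm
  have hunion : E.ncard ≤ (N k ∪ N l).ncard :=
    Set.ncard_le_ncard hkl ((hfin k).union (hfin l))
  have hsum := Set.ncard_union_add_ncard_inter (N k) (N l) (hfin k) (hfin l)
  have := hcard k
  have := hcard l
  by_cases hlr : l = r
  · subst hlr
    have : 2 ≤ (N k ∩ N l).ncard := by
      rw [← Set.ncard_pair huv]
      exact Set.ncard_le_ncard (by grind) ((hfin k).inter_of_left _)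
    omega
  · -- every point of `E` lies in two of `N k`, `N l`, `N r`
    have hkr := subset_union_of_mem_inter hdeg hE hv hvk hvr hrk.symm
    have hlr' := subset_union_of_mem_inter hdeg hE hw hwl hwr hlr
    have hinter : E.ncard ≤ (N k ∩ N l).ncard + (N r).ncard :=
      (Set.ncard_le_ncard (s := E) (t := N k ∩ N l ∪ N r) (by grind)
        (((hfin k).inter_of_left _).union (hfin r))).trans (Set.ncard_union_le _ _)
    have := hcard r
    omega

theorem ncard_le_three_of_pairwise_exists_mem (hdeg : ∀ x, {k | x ∈ N k}.ncard ≤ 2)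
    (hE : E.Pairwise fun x y => ∃ k, x ∈ N k ∧ y ∈ N k) {K : Set ι}
    (hK : K.Pairwise fun k l => ∃ x ∈ E, x ∈ N k ∧ x ∈ N l) : K.ncard ≤ 3 := by
  by_contra! h
  obtain ⟨k₁, hk₁⟩ := Set.nonempty_of_ncard_ne_zero (s := K) (by omega)
  have hK₁ : 2 < (K \ {k₁}).ncard := by
    rw [Set.ncard_sdiff_singleton_of_mem hk₁]
    omega
  obtain ⟨k₂, k₃, k₄, h₂, h₃, h₄, h₂₃, h₂₄, h₃₄⟩ :=
    (Set.two_lt_ncard_iff (s := K \ {k₁})).1 hK₁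
  simp only [Set.mem_sdiff, Set.mem_singleton_iff] at h₂ h₃ h₄
  obtain ⟨p, hp, hp₁, hp₂⟩ := hK hk₁ h₂.1 (Ne.symm h₂.2)
  obtain ⟨q, hq, hq₃, hq₄⟩ := hK h₃.1 h₄.1 h₃₄
  rcases eq_or_ne p q with rfl | hpq
  · have := eq_or_eq_of_mem_of_ncard_le_two hdeg hp₁ hp₂ hq₃ (Ne.symm h₂.2)
    grind
  · obtain ⟨j, hpj, hqj⟩ := hE hp hq hpq
    rcases eq_or_eq_of_mem_of_ncard_le_two hdeg hp₁ hp₂ hpj (Ne.symm h₂.2) with rfl | rfl <;>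
    rcases eq_or_eq_of_mem_of_ncard_le_two hdeg hq₃ hq₄ hqj h₃₄ with h | h <;> grind

end Blocks

namespace MGraph3

open MVtx3

variable {X Y Z : Type} {m t : ℕ} {tr : Fin m → X × Y × Z}

def coords (tr : Fin m → X × Y × Z) (k : Fin m) : Set (MVtx3 X Y Z m t) :=
  {vx (tr k).1, vy (tr k).2.1, vz (tr k).2.2}

def IsElem : MVtx3 X Y Z m t → Prop
  | vx _ | vy _ | vz _ => True
  | _ => False

theorem adj_iff {u v : MVtx3 X Y Z m t} :
    (MGraph3 tr).Adj u v ↔ u ≠ v ∧ (MRel3 tr u v ∨ MRel3 tr v u) :=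
  SimpleGraph.fromRel_adj _ _ _

theorem adj_vc_iff {k : Fin m} {w : MVtx3 X Y Z m t} :
    (MGraph3 tr).Adj (vc k) w ↔ w = va k ∨ w ∈ coords tr k := by
  cases w <;> simp [adj_iff, MRel3, coords, eq_comm]

theorem adj_va_iff {i : Fin m} {w : MVtx3 X Y Z m t} :
    (MGraph3 tr).Adj (va i) w ↔ w = vc i ∨ ∃ j, w = vh i j := by
  cases w <;> simp [adj_iff, MRel3, eq_comm]

@[simp] theorem vx_mem_coords {a : X} {k : Fin m} :
    (vx a : MVtx3 X Y Z m t) ∈ coords tr k ↔ (tr k).1 = a := by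
  simp [coords, eq_comm]

@[simp] theorem vy_mem_coords {b : Y} {k : Fin m} :
    (vy b : MVtx3 X Y Z m t) ∈ coords tr k ↔ (tr k).2.1 = b := by
  simp [coords, eq_comm]

@[simp] theorem vz_mem_coords {c : Z} {k : Fin m} :
    (vz c : MVtx3 X Y Z m t) ∈ coords tr k ↔ (tr k).2.2 = c := by
  simp [coords, eq_comm]

theorem isElem_of_mem_coords {k : Fin m} {w : MVtx3 X Y Z m t} (hw : w ∈ coords tr k) :
    IsElem w := by
  rcases hw with rfl | rfl | rfl <;> trivial

theorem finite_coords (k : Fin m) : (coords (t := t) tr k).Finite :=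
  ((Set.finite_singleton _).insert _).insert _

theorem ncard_coords_le_three (k : Fin m) : (coords (t := t) tr k).ncard ≤ 3 :=
  (Set.ncard_insert_le _ _).trans (Nat.succ_le_succ ((Set.ncard_insert_le _ _).trans (by simp)))

theorem ncard_setOf_mem_coords_le_two (hX : ∀ a : X, ({i : Fin m | (tr i).1 = a}).ncard ≤ 2)
    (hY : ∀ b : Y, ({i : Fin m | (tr i).2.1 = b}).ncard ≤ 2)
    (hZ : ∀ c : Z, ({i : Fin m | (tr i).2.2 = c}).ncard ≤ 2) (w : MVtx3 X Y Z m t) :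
    {k | w ∈ coords tr k}.ncard ≤ 2 := by
  cases w with
  | vx a => simpa using hX a
  | vy b => simpa using hY b
  | vz c => simpa using hZ c
  | _ => simp [coords]

def side : MVtx3 X Y Z m t → Bool
  | vc _ | vh _ _ => true
  | _ => false

def bicoloring (tr : Fin m → X × Y × Z) : (MGraph3 (t := t) tr).Coloring Bool :=
  Coloring.mk side fun {u v} h => by
    cases u <;> cases v <;> simp_all [adj_iff, MRel3, side]

open Classical in
/-- `min 4 (dist w H_i)` for the pendant set `H_i = {h_{i,j}}`. -/
noncomputable def pendantDist (tr : Fin m → X × Y × Z) (i : Fin m) : MVtx3 X Y Z m t → ℕ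
  | vh i' _ => if i' = i then 0 else 4
  | va i' => if i' = i then 1 else 4
  | vc i' => if i' = i then 2 else 4
  | vx a => if (tr i).1 = a then 3 else 4
  | vy b => if (tr i).2.1 = b then 3 else 4
  | vz c => if (tr i).2.2 = c then 3 else 4

theorem pendantDist_le_add_one {i : Fin m} {u v : MVtx3 X Y Z m t}
    (h : (MGraph3 tr).Adj u v) : pendantDist tr i v ≤ pendantDist tr i u + 1 := by
  cases u <;> cases v <;> simp [adj_iff, MRel3, pendantDist] at h ⊢ <;> grind

theorem neighborSet_vc (i : Fin m) :
    (MGraph3 (t := t) tr).neighborSet (vc i) = insert (va i) (coords tr i) := by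
  ext w
  simp [adj_vc_iff]

theorem Nc3_eq (i : Fin m) :
    Nc3 X Y Z m t tr i = insert (vc i) (insert (va i) (coords tr i)) ∪ Set.range (vh i) := by
  simp [Nc3, neighborSet_vc, Set.range, eq_comm]

theorem mem_Nc3_of_pendantDist_le {i : Fin m} {w : MVtx3 X Y Z m t}
    (hw : pendantDist tr i w ≤ 3) : w ∈ Nc3 X Y Z m t tr i := by
  rw [Nc3_eq]
  cases w <;> simp [pendantDist, coords] at hw ⊢ <;> grind

theorem ncard_Nc3 (ht : 5 ≤ t) (i : Fin m) : (Nc3 X Y Z m t tr i).ncard = t := by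
  rw [Nc3_eq, Set.ncard_union_eq (by simp [Set.disjoint_left, coords])
    (((finite_coords i).insert _).insert _)
    (Set.finite_range _), Set.ncard_range_of_injective (fun _ _ h => by cases h; rfl)]
  simp [coords, Set.ncard_insert_of_notMem]
  omega

theorem isSClub_Nc3 (i : Fin m) : IsSClub (MGraph3 tr) 3 (Nc3 X Y Z m t tr i) := by
  have hca : (MGraph3 (t := t) tr).Adj (vc i) (va i) := adj_vc_iff.2 (Or.inl rfl)
  refine isSClub_three_of_dominating_edge (c := vc i) (a := va i) (by simp [Nc3])
    (by simp [Nc3, hca]) hca ?_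
  rintro v ((rfl | hv) | ⟨j, rfl⟩)
  · exact Or.inl rfl
  · exact Or.inr (Or.inl hv.symm)
  · exact Or.inr (Or.inr (Or.inr (by simp [adj_va_iff, adj_comm])))

theorem exists_eq_vc_of_adj_of_isElem {e w : MVtx3 X Y Z m t} (he : IsElem e)
    (h : (MGraph3 tr).Adj w e) : ∃ k, w = vc k ∧ e ∈ coords tr k := by
  cases w <;> cases e <;> simp_all [adj_iff, MRel3, IsElem]

theorem side_eq_of_isElem {e e' : MVtx3 X Y Z m t} (he : IsElem e) (he' : IsElem e') :
    side e = side e' := by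
  cases e <;> cases e' <;> simp_all [IsElem, side]

section ThreeClub

variable {S : Set (MVtx3 X Y Z m t)} (hS : IsSClub (MGraph3 tr) 3 S)
include hS

theorem subset_Nc3_of_vh_mem {i : Fin m} {j : Fin (t - 5)} (hh : vh i j ∈ S) :
    S ⊆ Nc3 X Y Z m t tr i := by
  intro v hv
  have h := hS.apply_le_apply_add (f := pendantDist tr i)
    (fun _ _ => pendantDist_le_add_one) hh hv
  rw [show pendantDist tr i (vh i j) = 0 by simp [pendantDist]] at h
  exact mem_Nc3_of_pendantDist_le h

theorem exists_mem_coords_of_isElem {e e' : MVtx3 X Y Z m t} (he : e ∈ S) (he' : e' ∈ S)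
    (hel : IsElem e) (hel' : IsElem e') (hne : e ≠ e') :
    ∃ k, e ∈ coords tr k ∧ e' ∈ coords tr k := by
  obtain ⟨w, -, hew, hwe'⟩ :=
    hS.exists_common_neighbor (bicoloring tr) he he' hne (side_eq_of_isElem hel hel')
  obtain ⟨k, rfl, hek⟩ := exists_eq_vc_of_adj_of_isElem hel hew.symm
  obtain ⟨_, ⟨⟩, he'k⟩ := exists_eq_vc_of_adj_of_isElem hel' hwe'
  exact ⟨k, hek, he'k⟩

theorem exists_mem_coords_inter_of_vc_mem {k l : Fin m} (hk : vc k ∈ S) (hl : vc l ∈ S)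
    (hkl : k ≠ l) : ∃ e ∈ S, e ∈ coords tr k ∧ e ∈ coords tr l := by
  obtain ⟨w, hw, hkw, hwl⟩ :=
    hS.exists_common_neighbor (bicoloring tr) hk hl (by simpa using hkl) rfl
  rw [adj_vc_iff] at hkw
  rw [adj_comm, adj_vc_iff] at hwl
  rcases hkw with rfl | hwk
  · rcases hwl with h | h <;> simp_all [coords]
  · rcases hwl with rfl | hwl'
    · simp [coords] at hwk
    · exact ⟨w, hw, hwk, hwl'⟩

theorem eq_of_va_mem {i i' : Fin m} (hi : va i ∈ S) (hi' : va i' ∈ S) : i = i' := by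
  by_contra hne
  obtain ⟨w, -, hiw, hwi'⟩ :=
    hS.exists_common_neighbor (bicoloring tr) hi hi' (by simpa using hne) rfl
  rw [adj_va_iff] at hiw
  rw [adj_comm, adj_va_iff] at hwi'
  rcases hiw with rfl | ⟨j, rfl⟩ <;> rcases hwi' with h | ⟨j', h⟩ <;> simp_all

theorem mem_coords_of_va_mem {i : Fin m} (hnh : ∀ j, vh i j ∉ S) (hi : va i ∈ S)
    {e : MVtx3 X Y Z m t} (he : e ∈ S) (hel : IsElem e) : e ∈ coords tr i := by
  have hne : va i ≠ e := by rintro rfl; exact hel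
  obtain ⟨w, hw, hiw, hwe⟩ := hS.exists_common_neighbor (bicoloring tr) hi he hne <| by
    change side (va i : MVtx3 X Y Z m t) = side e
    cases e <;> simp_all [IsElem, side]
  rcases adj_va_iff.1 hiw with rfl | ⟨j, rfl⟩
  · exact (adj_vc_iff.1 hwe).resolve_left hne.symm
  · exact absurd hw (hnh j)

end ThreeClub

section Counting

variable {S : Set (MVtx3 X Y Z m t)}
  (hdeg : ∀ w : MVtx3 X Y Z m t, {k | w ∈ coords tr k}.ncard ≤ 2)
  (hS : IsSClub (MGraph3 tr) 3 S)
include hdeg hS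

theorem ncard_setOf_vc_mem_le_three : {k | vc k ∈ S}.ncard ≤ 3 :=
  ncard_le_three_of_pairwise_exists_mem (E := {e | e ∈ S ∧ IsElem e}) hdeg
    (fun _ he _ he' hne => exists_mem_coords_of_isElem hS he.1 he'.1 he.2 he'.2 hne)
    (fun _ hk _ hl hkl =>
      let ⟨e, heS, hek, hel⟩ := exists_mem_coords_inter_of_vc_mem hS hk hl hkl
      ⟨e, ⟨heS, isElem_of_mem_coords hek⟩, hek, hel⟩)

theorem ncard_sdiff_range_vc_le_four (hnh : ∀ i j, vh i j ∉ S) :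
    (S \ Set.range vc).ncard ≤ 4 := by
  have hcases : ∀ w ∈ S \ Set.range vc, IsElem w ∨ ∃ i, w = va i := by
    rintro (_ | _ | _ | i | k | ⟨i, j⟩) ⟨hw, hwc⟩
    iterate 3 exact Or.inl trivial
    · exact Or.inr ⟨i, rfl⟩
    · exact absurd ⟨k, rfl⟩ hwc
    · exact absurd hw (hnh i j)
  by_cases ha : ∃ i, va i ∈ S
  · obtain ⟨i, hi⟩ := ha
    have hsub : S \ Set.range vc ⊆ insert (va i) (coords tr i) := by
      intro w hw
      rcases hcases w hw with hel | ⟨i', rfl⟩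
      · exact Or.inr (mem_coords_of_va_mem hS (hnh i) hi hw.1 hel)
      · exact Or.inl (by rw [eq_of_va_mem hS hw.1 hi])
    calc (S \ Set.range vc).ncard
        ≤ (insert (va i) (coords tr i)).ncard :=
          Set.ncard_le_ncard hsub ((finite_coords i).insert _)
      _ ≤ (coords tr i).ncard + 1 := Set.ncard_insert_le _ _
      _ ≤ 4 := by have := ncard_coords_le_three (t := t) (tr := tr) i; omega
  · push Not at ha
    have hel : ∀ w ∈ S \ Set.range vc, IsElem w := fun w hw =>
      (hcases w hw).resolve_right fun ⟨i, hi⟩ => ha i (hi ▸ hw.1)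
    exact ncard_le_four_of_pairwise_mem finite_coords ncard_coords_le_three hdeg
      fun _ he _ he' hne => exists_mem_coords_of_isElem hS he.1 he'.1 (hel _ he) (hel _ he') hne

theorem ncard_le_seven (hnh : ∀ i j, vh i j ∉ S) : S.ncard ≤ 7 := by
  have hc : S ∩ Set.range vc = vc '' {k | vc k ∈ S} := by
    ext w
    constructor
    · rintro ⟨hw, k, rfl⟩
      exact ⟨k, hw, rfl⟩
    · rintro ⟨k, hk, rfl⟩
      exact ⟨hk, k, rfl⟩
  calc S.ncard = (S \ Set.range vc ∪ S ∩ Set.range vc).ncard := by rw [Set.sdiff_union_inter]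
    _ ≤ (S \ Set.range vc).ncard + (S ∩ Set.range vc).ncard := Set.ncard_union_le _ _
    _ ≤ 4 + 3 := by
      rw [hc, Set.ncard_image_of_injective _ (fun _ _ h => by cases h; rfl)]
      exact add_le_add (ncard_sdiff_range_vc_le_four hdeg hS hnh)
        (ncard_setOf_vc_mem_le_three hdeg hS)

end Counting

end MGraph3

/-- In `G_{M,t,3}` (for `t ≥ 8`, each element occurring in at most 2 triples),
every 3-club has size at most `t`, the 3-clubs of size exactly `t` are precisely
the sets `N[c_i] ∪ {h_{i,j} : j ∈ [t-5]}`, and each of these is indeed a 3-club of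
size `t`. -/
theorem threeClubs_of_MGraph3 {X Y Z : Type} {m t : ℕ} (ht : 8 ≤ t)
    (tr : Fin m → X × Y × Z)
    (hX : ∀ a : X, ({i : Fin m | (tr i).1 = a}).ncard ≤ 2)
    (hY : ∀ b : Y, ({i : Fin m | (tr i).2.1 = b}).ncard ≤ 2)
    (hZ : ∀ c : Z, ({i : Fin m | (tr i).2.2 = c}).ncard ≤ 2) :
    (∀ S : Set (MVtx3 X Y Z m t), IsSClub (MGraph3 tr) 3 S →
      S.ncard ≤ t ∧ (S.ncard = t → ∃ i : Fin m, S = Nc3 X Y Z m t tr i)) ∧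
    (∀ i : Fin m,
      IsSClub (MGraph3 tr) 3 (Nc3 X Y Z m t tr i) ∧ (Nc3 X Y Z m t tr i).ncard = t) := by
  have hNc3 : ∀ i, (Nc3 X Y Z m t tr i).ncard = t := MGraph3.ncard_Nc3 (by omega)
  refine ⟨fun S hS => ?_, fun i => ⟨MGraph3.isSClub_Nc3 i, hNc3 i⟩⟩
  by_cases hh : ∃ i j, MVtx3.vh i j ∈ S
  · obtain ⟨i, j, hij⟩ := hh
    have hsub := MGraph3.subset_Nc3_of_vh_mem hS hij
    have hfin : (Nc3 X Y Z m t tr i).Finite := Set.finite_of_ncard_pos (by rw [hNc3]; omega)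
    have hle := Set.ncard_le_ncard hsub hfin
    rw [hNc3] at hle
    refine ⟨hle, fun hcard => ⟨i, Set.eq_of_subset_of_ncard_le hsub ?_ hfin⟩⟩
    rw [hNc3, hcard]
  · push Not at hh
    have := MGraph3.ncard_le_seven (MGraph3.ncard_setOf_mem_coords_le_two hX hY hZ) hS hh
    omega
end

section
/- In the graph G' constructed in the PC(k,s) reduction (s ≥ 3), for any two distinct colors i ≠ j, the distance between color vertices c_i and c_j is at least 2(s-1) > s, and the distance between c_i and ĉ_j is at least 2(s-1)+1 > s. Hence no s-club of G' contains color vertices of two distinct colors, and any partition of G' into at most k s-clubs assigns each pair {c_i, ĉ_i} to a distinct s-club. -/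
/-- Vertices of the graph `G'` of the PC(k,s) reduction: the original vertices of
`G`, the color vertices `c_i`, `ĉ_i` (`i ∈ [k]`), and the internal auxiliary
vertices of the added paths of length `s-1`. -/
inductive RVtx (V : Type) (k s : ℕ) where
  | orig (v : V)
  | col (i : Fin k)
  | colh (i : Fin k)
  | aux (v : V) (i : Fin k) (j : Fin (s - 2))

/-- Base adjacency relation of `G'` (for a bipartite `G` with sides given by
`side : V → Bool`, where `side v = false` means `v ∈ V1`, and lists `L`):
the bipartite complement of `G` on original vertices; the edges `c_i — ĉ_i`; and,
for each `v` with `i ∈ L v`, a path `v — aux v i 0 — ⋯ — aux v i (s-3) — ĉ_i`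
(if `v ∈ V1`) resp. `— c_i` (if `v ∈ V2`). -/
def RRel {V : Type} {k s : ℕ} (G : SimpleGraph V) (side : V → Bool)
    (L : V → Finset (Fin k)) : RVtx V k s → RVtx V k s → Prop
  | RVtx.orig u, RVtx.orig v => side u ≠ side v ∧ ¬ G.Adj u v
  | RVtx.col i, RVtx.colh i' => i = i'
  | RVtx.orig u, RVtx.aux v i j => u = v ∧ i ∈ L v ∧ (j : ℕ) = 0
  | RVtx.aux u i j, RVtx.aux v i' j' =>
      u = v ∧ i = i' ∧ i ∈ L v ∧ (j' : ℕ) = (j : ℕ) + 1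
  | RVtx.aux v i j, RVtx.colh i' => i = i' ∧ i ∈ L v ∧ side v = false ∧ (j : ℕ) = s - 3
  | RVtx.aux v i j, RVtx.col i' => i = i' ∧ i ∈ L v ∧ side v = true ∧ (j : ℕ) = s - 3
  | _, _ => False

/-- The graph `G'` of the PC(k,s) reduction. -/
def RGraph {V : Type} {k s : ℕ} (G : SimpleGraph V) (side : V → Bool)
    (L : V → Finset (Fin k)) : SimpleGraph (RVtx V k s) :=
  SimpleGraph.fromRel (RRel G side L)

namespace SimpleGraph.Walk

theorem le_add_length {V : Type*} {G : SimpleGraph V} (f : V → ℤ)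
    (hf : ∀ ⦃x y⦄, G.Adj x y → f y ≤ f x + 1) {u v : V} (p : G.Walk u v) :
    f v ≤ f u + p.length := by
  induction p with
  | nil => simp
  | cons h _ ih =>
    rw [length_cons]
    have := hf h
    push_cast
    omega

end SimpleGraph.Walk

namespace RVtx

variable {V : Type} {k s : ℕ}

def colorPotential (i : Fin k) : RVtx V k s → ℤ
  | orig _ => s - 1
  | col i' | colh i' => if i' = i then 0 else 2 * s - 2
  | aux _ i' j => if i' = i then s - 2 - j else s + j

def parity (side : V → Bool) : RVtx V k s → Bool
  | orig v => side v
  | col _ => decide (s % 2 = 1)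
  | colh _ => decide (s % 2 = 0)
  | aux v _ j => xor (side v) (decide ((j : ℕ) % 2 = 0))

end RVtx

open RVtx

section
variable {V : Type} {k s : ℕ} {G : SimpleGraph V} {side : V → Bool} {L : V → Finset (Fin k)}

theorem RRel.abs_colorPotential_sub_le (i : Fin k) {x y : RVtx V k s}
    (h : RRel G side L x y) : |colorPotential i x - colorPotential i y| ≤ 1 := by
  rw [abs_le]
  cases x <;> cases y <;> try exact h.elim
  case orig.orig => simp [colorPotential]
  case col.colh => obtain rfl := h; simp only [colorPotential]; split_ifs <;> omega
  case orig.aux => obtain ⟨-, -, hj⟩ := h; simp only [colorPotential]; split_ifs <;> omega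
  case aux.aux => obtain ⟨-, rfl, -, hj⟩ := h; simp only [colorPotential]; split_ifs <;> omega
  case aux.colh j _ =>
    obtain ⟨rfl, -, -, hj⟩ := h
    have := j.2
    simp only [colorPotential]; split_ifs <;> omega
  case aux.col j _ =>
    obtain ⟨rfl, -, -, hj⟩ := h
    have := j.2
    simp only [colorPotential]; split_ifs <;> omega

theorem RRel.parity_ne {x y : RVtx V k s} (h : RRel G side L x y) :
    parity side x ≠ parity side y := by
  cases x <;> cases y <;> try exact h.elim
  case orig.orig => exact h.1
  case col.colh => cases Nat.mod_two_eq_zero_or_one s <;> simp [parity, *]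
  case orig.aux => obtain ⟨rfl, -, hj⟩ := h; simp [parity, hj]
  case aux.aux =>
    obtain ⟨rfl, rfl, -, hj⟩ := h
    simp only [parity, hj]
    cases side _ <;> simp <;> omega
  case aux.colh j _ =>
    obtain ⟨rfl, -, hside, hj⟩ := h
    have := j.2
    simp only [parity, hside]; simp; omega
  case aux.col j _ =>
    obtain ⟨rfl, -, hside, hj⟩ := h
    have := j.2
    simp only [parity, hside]; simp; omega

namespace RGraph

theorem colorPotential_le_add_one (i : Fin k) {x y : RVtx V k s}
    (h : (RGraph G side L).Adj x y) : colorPotential i y ≤ colorPotential i x + 1 := by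
  rcases h.2 with h | h
  · linarith [abs_le.mp (RRel.abs_colorPotential_sub_le i h)]
  · linarith [abs_le.mp (RRel.abs_colorPotential_sub_le i h)]

variable (G side L) in
def parityColoring : (RGraph G side L : SimpleGraph (RVtx V k s)).Coloring Bool :=
  .mk (parity side) fun h => h.2.elim RRel.parity_ne fun h' => h'.parity_ne.symm

theorem two_mul_sub_one_le_length_of_ne {i j : Fin k} (hij : i ≠ j) {x y : RVtx V k s}
    (hx : x = col i ∨ x = colh i) (hy : y = col j ∨ y = colh j)
    (p : (RGraph G side L).Walk x y) : 2 * (s - 1) ≤ p.length := by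
  have := p.le_add_length (colorPotential i) fun _ _ => colorPotential_le_add_one i
  rcases hx with rfl | rfl <;> rcases hy with rfl | rfl <;>
    simp [colorPotential, hij.symm] at this <;> omega

theorem odd_length_of_col_colh {i j : Fin k}
    (p : (RGraph G side L).Walk (col i : RVtx V k s) (colh j)) : Odd p.length := by
  rw [(parityColoring G side L).odd_length_iff_not_congr]
  change ¬parity side (col i) = true ↔ parity side (colh j) = true
  cases Nat.mod_two_eq_zero_or_one s <;> simp [parity, *]

theorem eq_of_isSClub (hs : 3 ≤ s) {S : Set (RVtx V k s)}
    (hS : IsSClub (RGraph G side L) s S) {i j : Fin k} (hi : col i ∈ S ∨ colh i ∈ S)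
    (hj : col j ∈ S ∨ colh j ∈ S) : i = j := by
  by_contra hij
  obtain ⟨x, hxS, hx⟩ : ∃ x ∈ S, x = col i ∨ x = colh i := by
    rcases hi with h | h
    exacts [⟨_, h, .inl rfl⟩, ⟨_, h, .inr rfl⟩]
  obtain ⟨y, hyS, hy⟩ : ∃ y ∈ S, y = col j ∨ y = colh j := by
    rcases hj with h | h
    exacts [⟨_, h, .inl rfl⟩, ⟨_, h, .inr rfl⟩]
  obtain ⟨p, hp⟩ := hS ⟨x, hxS⟩ ⟨y, hyS⟩
  have : 2 * (s - 1) ≤ (p.map (SimpleGraph.Embedding.induce S).toHom).length :=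
    two_mul_sub_one_le_length_of_ne hij hx hy _
  rw [SimpleGraph.Walk.length_map] at this
  omega

end RGraph

end

theorem exists_injective_of_separating_cover {κ ι α : Type*} [Fintype κ] [Fintype ι]
    (hcard : Fintype.card ι ≤ Fintype.card κ) (c c' : κ → α) (P : ι → Set α)
    (hcover : (⋃ a, P a) = Set.univ)
    (hsep : ∀ a i j, (c i ∈ P a ∨ c' i ∈ P a) → (c j ∈ P a ∨ c' j ∈ P a) →
      i = j) :
    ∃ g : κ → ι, Function.Injective g ∧ ∀ i, c i ∈ P (g i) ∧ c' i ∈ P (g i) := by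
  have hmem (x : α) : ∃ a, x ∈ P a := Set.mem_iUnion.mp (hcover ▸ Set.mem_univ x)
  choose cell hcell using hmem
  have hinj : Function.Injective (cell ∘ c) :=
    fun i j (hij : cell (c i) = cell (c j)) =>
      hsep (cell (c j)) i j (.inl (hij ▸ hcell (c i))) (.inl (hcell (c j)))
  have hsurj : Function.Surjective (cell ∘ c) :=
    ((Fintype.bijective_iff_injective_and_card _).mpr
      ⟨hinj, (Fintype.card_le_of_injective _ hinj).antisymm hcard⟩).2
  refine ⟨cell ∘ c, hinj, fun i => ⟨hcell (c i), ?_⟩⟩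
  obtain ⟨i₀, hi₀⟩ := hsurj (cell (c' i))
  have hi' := hcell (c' i)
  rw [← hi₀] at hi'
  obtain rfl := hsep _ i₀ i (.inl (hcell (c i₀))) (.inr hi')
  exact hi'

theorem colorVertices_far_apart_general {V : Type} {k s : ℕ} (hs : 3 ≤ s)
    (G : SimpleGraph V) (side : V → Bool)
    (L : V → Finset (Fin k)) :
    (∀ i j : Fin k, i ≠ j →
      (∀ p : (RGraph G side L).Walk (RVtx.col i : RVtx V k s) (RVtx.col j),
        2 * (s - 1) ≤ p.length) ∧
      (∀ p : (RGraph G side L).Walk (RVtx.col i : RVtx V k s) (RVtx.colh j),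
        2 * (s - 1) + 1 ≤ p.length)) ∧
    s < 2 * (s - 1) ∧
    (∀ S : Set (RVtx V k s), IsSClub (RGraph G side L) s S →
      ∀ i j : Fin k, (RVtx.col i ∈ S ∨ RVtx.colh i ∈ S) →
        (RVtx.col j ∈ S ∨ RVtx.colh j ∈ S) → i = j) ∧
    (∀ (ι : Type) [Fintype ι] (P : ι → Set (RVtx V k s)),
      Fintype.card ι ≤ k →
      Pairwise (Function.onFun Disjoint P) →
      (⋃ a, P a) = Set.univ →
      (∀ a, IsSClub (RGraph G side L) s (P a)) →
      ∃ g : Fin k → ι, Function.Injective g ∧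
        ∀ i : Fin k, RVtx.col i ∈ P (g i) ∧ RVtx.colh i ∈ P (g i)) := by
  refine ⟨fun i j hij => ⟨fun p => ?_, fun p => ?_⟩, by omega,
    fun S hS i j => RGraph.eq_of_isSClub hs hS, fun ι _ P hcard _ hcover hclub => ?_⟩
  · exact RGraph.two_mul_sub_one_le_length_of_ne hij (.inl rfl) (.inl rfl) p
  · -- every walk from `c_i` to `ĉ_j` has odd length, and `2(s - 1)` is even
    obtain ⟨m, hm⟩ := RGraph.odd_length_of_col_colh p
    have := RGraph.two_mul_sub_one_le_length_of_ne hij (.inl rfl) (.inr rfl) p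
    omega
  · exact exists_injective_of_separating_cover (by simpa using hcard) _ _ P hcover
      fun a _ _ => RGraph.eq_of_isSClub hs (hclub a)

/-- In `G'` (for `s ≥ 3`), for distinct colors `i ≠ j` every walk from `c_i` to `c_j`
has length at least `2(s-1)` and every walk from `c_i` to `ĉ_j` has length at least
`2(s-1)+1`, with `2(s-1) > s`.  Hence no `s`-club of `G'` contains color vertices of
two distinct colors, and any partition of `G'` into at most `k` `s`-clubs assigns
each pair `{c_i, ĉ_i}` to its own cell. -/
theorem colorVertices_far_apart {V : Type} {k s : ℕ} (hs : 3 ≤ s)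
    (G : SimpleGraph V) (side : V → Bool)
    (hG : ∀ u v : V, G.Adj u v → side u ≠ side v)
    (L : V → Finset (Fin k)) :
    (∀ i j : Fin k, i ≠ j →
      (∀ p : (RGraph G side L).Walk (RVtx.col i : RVtx V k s) (RVtx.col j),
        2 * (s - 1) ≤ p.length) ∧
      (∀ p : (RGraph G side L).Walk (RVtx.col i : RVtx V k s) (RVtx.colh j),
        2 * (s - 1) + 1 ≤ p.length)) ∧
    s < 2 * (s - 1) ∧
    (∀ S : Set (RVtx V k s), IsSClub (RGraph G side L) s S →
      ∀ i j : Fin k, (RVtx.col i ∈ S ∨ RVtx.colh i ∈ S) →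
        (RVtx.col j ∈ S ∨ RVtx.colh j ∈ S) → i = j) ∧
    (∀ (ι : Type) [Fintype ι] (P : ι → Set (RVtx V k s)),
      Fintype.card ι ≤ k →
      Pairwise (Function.onFun Disjoint P) →
      (⋃ a, P a) = Set.univ →
      (∀ a, IsSClub (RGraph G side L) s (P a)) →
      ∃ g : Fin k → ι, Function.Injective g ∧
        ∀ i : Fin k, RVtx.col i ∈ P (g i) ∧ RVtx.colh i ∈ P (g i)) :=
  colorVertices_far_apart_general hs G side L
end

section
/- Let G = (V1, V2, E) be bipartite with balanced list coloring classes S_1,...,S_k (each nonempty class either a single vertex or meeting both V1 and V2, each S_i independent, colors from lists). Then in the reduction graph G', each set S'_i = S_i ∪ {c_i, ĉ_i} ∪ {auxiliary vertices of paths from vertices of S_i to their color vertex} induces a subgraph of diameter at most s, i.e., is an s-club. -/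
open SimpleGraph

theorem ENat.le_of_le_of_le_of_add_le_two_mul {x a b : ℕ∞} {n : ℕ} (ha : x ≤ a) (hb : x ≤ b)
    (hab : a + b ≤ (2 * n : ℕ)) : x ≤ n := by
  have hx : x + x ≤ (2 * n : ℕ) := (add_le_add ha hb).trans hab
  induction x using ENat.recTopCoe with
  | top =>
    rw [top_add, top_le_iff] at hx
    exact absurd hx (ENat.natCast_ne_top _)
  | coe m =>
    norm_cast at hx ⊢
    omega

namespace SimpleGraph

variable {W : Type*} {G : SimpleGraph W}

theorem edist_le_of_two_routes {x y a b a' b' : W} {m m' d n : ℕ}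
    (hx : G.edist a x + G.edist x a' ≤ m) (hy : G.edist b y + G.edist y b' ≤ m')
    (hends : G.edist a b + G.edist a' b' ≤ d) (hn : m + m' + d ≤ 2 * n) :
    G.edist x y ≤ n := by
  refine ENat.le_of_le_of_le_of_add_le_two_mul
    ((G.edist_triangle (v := a)).trans (add_le_add le_rfl (G.edist_triangle (v := b))))
    ((G.edist_triangle (v := a')).trans (add_le_add le_rfl (G.edist_triangle (v := b')))) ?_
  calc G.edist x a + (G.edist a b + G.edist b y) +
        (G.edist x a' + (G.edist a' b' + G.edist b' y))
      = (G.edist a x + G.edist x a') + (G.edist b y + G.edist y b') +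
          (G.edist a b + G.edist a' b') := by
        rw [G.edist_comm (u := x) (v := a), G.edist_comm (u := b') (v := y)]; ring
    _ ≤ m + m' + d := add_le_add (add_le_add hx hy) hends
    _ ≤ (2 * n : ℕ) := by exact_mod_cast hn

end SimpleGraph

theorem isSClub_of_edist_le {W : Type*} {G : SimpleGraph W} {S : Set W} {n : ℕ}
    (h : ∀ x y : S, (G.induce S).edist x y ≤ n) : IsSClub G n S := by
  intro x y
  have hreach : (G.induce S).Reachable x y :=
    reachable_of_edist_ne_top ((h x y).trans_lt (ENat.natCast_lt_top n)).ne
  obtain ⟨p, hp⟩ := hreach.exists_walk_length_eq_edist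
  exact ⟨p, by exact_mod_cast hp ▸ h x y⟩

def RVtx.pathEnd {V : Type} {k s : ℕ} (i : Fin k) : Bool → RVtx V k s
  | false => RVtx.colh i
  | true => RVtx.col i

def IsBalanced {V : Type} {k : ℕ} (side : V → Bool) (c : V → Fin k) : Prop :=
  ∀ i : Fin k, (∃ v, c v = i) →
    (∃! v, c v = i) ∨ ((∃ v, c v = i ∧ side v = false) ∧ (∃ v, c v = i ∧ side v = true))

section LiftedClass

variable {V : Type} {k : ℕ} {G : SimpleGraph V} {side : V → Bool} {L : V → Finset (Fin k)}
  {s : ℕ} {c : V → Fin k} {i : Fin k} {u v : V}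

theorem IsBalanced.exists_other_side (hbal : IsBalanced side c) (hu : c u = i) (hv : c v = i)
    (huv : u ≠ v) : ∃ w, c w = i ∧ side w ≠ side u := by
  rcases hbal i ⟨u, hu⟩ with ⟨x, -, huniq⟩ | ⟨⟨w₁, hw₁, hs₁⟩, ⟨w₂, hw₂, hs₂⟩⟩
  · exact absurd ((huniq u hu).trans (huniq v hv).symm) huv
  · cases h : side u
    · exact ⟨w₂, hw₂, by simp [hs₂]⟩
    · exact ⟨w₁, hw₁, by simp [hs₁]⟩

variable (s c i) in
/-- The set `S'_i`. -/
def liftedClass : Set (RVtx V k s) :=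
  {w : RVtx V k s | ∃ v, c v = i ∧
      (w = RVtx.orig v ∨ ∃ j : Fin (s - 2), w = RVtx.aux v i j)} ∪
    {RVtx.col i, RVtx.colh i}

variable (G side L s c i) in
abbrev clubGraph : SimpleGraph (liftedClass s c i) :=
  (RGraph G side L).induce (liftedClass s c i)

def origV (hv : c v = i) : liftedClass s c i := ⟨RVtx.orig v, Or.inl ⟨v, hv, Or.inl rfl⟩⟩

def auxV (hv : c v = i) (j : Fin (s - 2)) : liftedClass s c i :=
  ⟨RVtx.aux v i j, Or.inl ⟨v, hv, Or.inr ⟨j, rfl⟩⟩⟩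

def pathEndV (σ : Bool) : liftedClass s c i :=
  ⟨RVtx.pathEnd i σ, by cases σ <;> simp [liftedClass, RVtx.pathEnd]⟩

theorem clubGraph_edist_le_one {x y : liftedClass s c i} (hne : x.1 ≠ y.1)
    (h : RRel G side L x.1 y.1) : (clubGraph G side L s c i).edist x y ≤ 1 :=
  edist_le_one_iff_adj_or_eq.2 (Or.inl ⟨hne, Or.inl h⟩)

theorem edist_pathEndV_pathEndV_le_one (σ τ : Bool) :
    (clubGraph G side L s c i).edist (pathEndV σ) (pathEndV τ) ≤ 1 := by
  have hcol : (clubGraph G side L s c i).edist (pathEndV true) (pathEndV false) ≤ 1 :=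
    clubGraph_edist_le_one (by simp [pathEndV, RVtx.pathEnd]) rfl
  cases σ <;> cases τ
  · simp
  · rwa [edist_comm]
  · exact hcol
  · simp

theorem rRel_aux_pathEnd (hL : i ∈ L v) {j : Fin (s - 2)} (hj : (j : ℕ) = s - 3) :
    RRel G side L (RVtx.aux v i j) (RVtx.pathEnd i (side v)) := by
  cases h : side v
  · exact ⟨rfl, hL, h, hj⟩
  · exact ⟨rfl, hL, h, hj⟩

theorem edist_origV_origV_le_one (hproper : ∀ u v, G.Adj u v → c u ≠ c v) (hu : c u = i)
    (hv : c v = i) (hside : side u ≠ side v) :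
    (clubGraph G side L s c i).edist (origV hu) (origV hv) ≤ 1 :=
  clubGraph_edist_le_one (by rintro ⟨⟩; exact hside rfl)
    ⟨hside, fun h => hproper u v h (hu.trans hv.symm)⟩

theorem edist_origV_add_edist_pathEndV_le_two (hproper : ∀ u v, G.Adj u v → c u ≠ c v)
    (hbal : IsBalanced side c) (hu : c u = i) (hv : c v = i) :
    (clubGraph G side L s c i).edist (origV hu) (origV hv) +
      (clubGraph G side L s c i).edist (pathEndV (side u)) (pathEndV (side v)) ≤ 2 := by
  by_cases hside : side u = side v
  · rw [hside, edist_self, add_zero]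
    by_cases huv : u = v
    · subst huv
      simp
    obtain ⟨w, hw, hsw⟩ := hbal.exists_other_side hu hv huv
    calc _ ≤ (clubGraph G side L s c i).edist (origV hu) (origV hw) +
          (clubGraph G side L s c i).edist (origV hw) (origV hv) := SimpleGraph.edist_triangle
      _ ≤ 1 + 1 := add_le_add (edist_origV_origV_le_one hproper hu hw (Ne.symm hsw))
          (edist_origV_origV_le_one hproper hw hv (hside ▸ hsw))
      _ = 2 := one_add_one_eq_two
  · calc _ ≤ 1 + 1 := add_le_add (edist_origV_origV_le_one hproper hu hv hside)
          (edist_pathEndV_pathEndV_le_one _ _)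
      _ = 2 := one_add_one_eq_two

theorem edist_auxV_auxV_le (hL : i ∈ L v) (hv : c v = i) {a b : Fin (s - 2)} (hab : a ≤ b) :
    (clubGraph G side L s c i).edist (auxV hv a) (auxV hv b) ≤ (b - a : ℕ) := by
  obtain ⟨d, hd⟩ : ∃ d, (b : ℕ) = a + d := ⟨b - a, by omega⟩
  induction d generalizing b with
  | zero =>
    obtain rfl : b = a := Fin.ext hd
    simp
  | succ d ih =>
    have hd' : (a : ℕ) + d < s - 2 := by omega
    calc _ ≤ (clubGraph G side L s c i).edist (auxV hv a) (auxV hv ⟨a + d, hd'⟩) +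
          (clubGraph G side L s c i).edist (auxV hv ⟨a + d, hd'⟩) (auxV hv b) :=
          SimpleGraph.edist_triangle
      _ ≤ d + 1 := add_le_add
          ((ih (b := ⟨a + d, hd'⟩) (Fin.le_def.2 (Nat.le_add_right _ _)) rfl).trans (by simp))
          (clubGraph_edist_le_one (by simp [auxV, Fin.ext_iff]; omega) ⟨rfl, rfl, hL, hd⟩)
      _ = (b - a : ℕ) := by rw [hd, Nat.add_sub_cancel_left, Nat.cast_succ]

theorem edist_origV_auxV_le (hL : i ∈ L v) (hv : c v = i) (j : Fin (s - 2)) :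
    (clubGraph G side L s c i).edist (origV hv) (auxV hv j) ≤ (j + 1 : ℕ) := by
  have h0 : 0 < s - 2 := j.pos
  calc _ ≤ (clubGraph G side L s c i).edist (origV hv) (auxV hv ⟨0, h0⟩) +
        (clubGraph G side L s c i).edist (auxV hv ⟨0, h0⟩) (auxV hv j) :=
        SimpleGraph.edist_triangle
    _ ≤ 1 + (j - 0 : ℕ) :=
        add_le_add (clubGraph_edist_le_one (by simp [origV, auxV]) ⟨rfl, hL, rfl⟩)
        (edist_auxV_auxV_le hL hv (Fin.mk_le_mk.2 (Nat.zero_le j)))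
    _ = (j + 1 : ℕ) := by simp [add_comm]

theorem edist_auxV_pathEndV_le (hL : i ∈ L v) (hv : c v = i) (j : Fin (s - 2)) :
    (clubGraph G side L s c i).edist (auxV hv j) (pathEndV (side v)) ≤ (s - 2 - j : ℕ) := by
  have hlast : s - 3 < s - 2 := by have := j.isLt; omega
  calc _ ≤ (clubGraph G side L s c i).edist (auxV hv j) (auxV hv ⟨s - 3, hlast⟩) +
        (clubGraph G side L s c i).edist (auxV hv ⟨s - 3, hlast⟩) (pathEndV (side v)) :=
        SimpleGraph.edist_triangle
    _ ≤ (s - 3 - j : ℕ) + 1 := add_le_add (edist_auxV_auxV_le hL hv (Fin.mk_le_mk.2 (by omega)))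
        (clubGraph_edist_le_one (by cases side v <;> simp [auxV, pathEndV, RVtx.pathEnd])
          (rRel_aux_pathEnd hL rfl))
    _ = (s - 2 - j : ℕ) := by norm_cast; omega

variable (G side L) in
def IsOnPath (hv : c v = i) (x : liftedClass s c i) : Prop :=
  (clubGraph G side L s c i).edist (origV hv) x +
    (clubGraph G side L s c i).edist x (pathEndV (side v)) ≤ (s - 1 : ℕ)

theorem isOnPath_auxV (hL : i ∈ L v) (hv : c v = i) (j : Fin (s - 2)) :
    IsOnPath G side L hv (auxV hv j) :=
  (add_le_add (edist_origV_auxV_le hL hv j) (edist_auxV_pathEndV_le hL hv j)).trans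
    (by have := j.isLt; norm_cast; omega)

theorem isOnPath_origV (hs : 3 ≤ s) (hL : i ∈ L v) (hv : c v = i) :
    IsOnPath G side L hv (origV (s := s) hv) := by
  have h0 : 0 < s - 2 := by omega
  rw [IsOnPath, edist_self, zero_add]
  exact SimpleGraph.edist_triangle.trans <|
    (add_le_add (edist_origV_auxV_le hL hv ⟨0, h0⟩) (edist_auxV_pathEndV_le hL hv ⟨0, h0⟩)).trans
      (by norm_cast; omega)

theorem exists_isOnPath_or_eq_pathEndV (hs : 3 ≤ s) (hlist : ∀ v, c v ∈ L v)
    (x : liftedClass s c i) :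
    (∃ v, ∃ hv : c v = i, IsOnPath G side L hv x) ∨ ∃ σ, x = pathEndV σ := by
  obtain ⟨x, ⟨v, hv, rfl | ⟨j, rfl⟩⟩ | rfl | rfl⟩ := x
  · exact Or.inl ⟨v, hv, isOnPath_origV hs (hv ▸ hlist v) hv⟩
  · exact Or.inl ⟨v, hv, isOnPath_auxV (hv ▸ hlist v) hv j⟩
  · exact Or.inr ⟨true, rfl⟩
  · exact Or.inr ⟨false, rfl⟩

theorem IsOnPath.edist_le {x y : liftedClass s c i} (hproper : ∀ u v, G.Adj u v → c u ≠ c v)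
    (hbal : IsBalanced side c) (hs : 1 ≤ s) {hu : c u = i} {hv : c v = i}
    (hx : IsOnPath G side L hu x) (hy : IsOnPath G side L hv y) :
    (clubGraph G side L s c i).edist x y ≤ s :=
  edist_le_of_two_routes (d := 2) hx hy
    (by exact_mod_cast edist_origV_add_edist_pathEndV_le_two hproper hbal hu hv) (by omega)

theorem IsOnPath.edist_pathEndV_le {y : liftedClass s c i} (hs : 1 ≤ s) {hv : c v = i}
    (hy : IsOnPath G side L hv y) (σ : Bool) :
    (clubGraph G side L s c i).edist (pathEndV σ) y ≤ s :=
  calc _ ≤ (clubGraph G side L s c i).edist (pathEndV σ) (pathEndV (side v)) +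
        (clubGraph G side L s c i).edist (pathEndV (side v)) y := SimpleGraph.edist_triangle
    _ ≤ 1 + (s - 1 : ℕ) :=
        add_le_add (edist_pathEndV_pathEndV_le_one _ _)
          (edist_comm.trans_le (le_add_self.trans hy))
    _ = s := by norm_cast; omega

end LiftedClass

theorem balanced_classes_are_clubs_general {V : Type} {k s : ℕ} (hs : 3 ≤ s)
    (G : SimpleGraph V) (side : V → Bool)
    (L : V → Finset (Fin k)) (c : V → Fin k)
    (hlist : ∀ v : V, c v ∈ L v)
    (hproper : ∀ u v : V, G.Adj u v → c u ≠ c v)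
    (hbal : ∀ i : Fin k, (∃ v, c v = i) →
      (∃! v, c v = i) ∨
      ((∃ v, c v = i ∧ side v = false) ∧ (∃ v, c v = i ∧ side v = true))) :
    ∀ i : Fin k,
      IsSClub (RGraph G side L) s
        ({w : RVtx V k s | ∃ v, c v = i ∧
            (w = RVtx.orig v ∨ ∃ j : Fin (s - 2), w = RVtx.aux v i j)} ∪
          {RVtx.col i, RVtx.colh i}) := by
  intro i
  show IsSClub _ s (liftedClass s c i)
  refine isSClub_of_edist_le fun x y => ?_
  rcases exists_isOnPath_or_eq_pathEndV hs hlist x with ⟨u, hu, hx⟩ | ⟨σ, rfl⟩ <;>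
    rcases exists_isOnPath_or_eq_pathEndV hs hlist y with ⟨v, hv, hy⟩ | ⟨τ, rfl⟩
  · exact hx.edist_le hproper hbal (by omega) hy
  · rw [edist_comm]
    exact hx.edist_pathEndV_le (by omega) τ
  · exact hy.edist_pathEndV_le (by omega) σ
  · exact (edist_pathEndV_pathEndV_le_one σ τ).trans (by exact_mod_cast (by omega : 1 ≤ s))

/-- Given a balanced proper list coloring `c` of the bipartite graph `G` (every
nonempty color class is a single vertex or meets both sides; adjacent vertices get
different colors; colors come from the lists), each set
`S'_i = {v : c v = i} ∪ {c_i, ĉ_i} ∪ {auxiliary vertices of the paths from the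
vertices of color `i` to their color vertex}` is an `s`-club of `G'`. -/
theorem balanced_classes_are_clubs {V : Type} {k s : ℕ} (hs : 3 ≤ s)
    (G : SimpleGraph V) (side : V → Bool)
    (hG : ∀ u v : V, G.Adj u v → side u ≠ side v)
    (L : V → Finset (Fin k)) (c : V → Fin k)
    (hlist : ∀ v : V, c v ∈ L v)
    (hproper : ∀ u v : V, G.Adj u v → c u ≠ c v)
    (hbal : ∀ i : Fin k, (∃ v, c v = i) →
      (∃! v, c v = i) ∨
      ((∃ v, c v = i ∧ side v = false) ∧ (∃ v, c v = i ∧ side v = true))) :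
    ∀ i : Fin k,
      IsSClub (RGraph G side L) s
        ({w : RVtx V k s | ∃ v, c v = i ∧
            (w = RVtx.orig v ∨ ∃ j : Fin (s - 2), w = RVtx.aux v i j)} ∪
          {RVtx.col i, RVtx.colh i}) :=
  balanced_classes_are_clubs_general hs G side L c hlist hproper hbal
end
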